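/- arXiv:2307.05737 — 2 statements merged into one kernel-verified Lean document; each statement's English description precedes it below -/
import Mathlib

section
/- Let A₁,…,Aₘ ∈ ℝⁿ be distinct points and b₁,…,bₘ > 0. Fix an index i. The point Aᵢ minimizes f(x) = Σⱼ bⱼ ‖x − Aⱼ‖ if and only if ‖ Σ_{j ≠ i} bⱼ (Aⱼ − Aᵢ)/‖Aⱼ − Aᵢ‖ ‖ ≤ bᵢ. -/
/-! Each distance `‖y - Aⱼ‖`, `j ≠ i`, lies between its linearization at `Aᵢ` and that
linearization plus `‖y - Aᵢ‖² / (2 ‖Aⱼ - Aᵢ‖)` (AM-GM). With `D` the weighted sum of the unit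
vectors from `Aᵢ` towards the other points, the lower bound and Cauchy–Schwarz give
`f y - f Aᵢ ≥ bᵢ ‖y - Aᵢ‖ - ⟪D, y - Aᵢ⟫ ≥ 0` when `‖D‖ ≤ bᵢ`; conversely the upper bound at
`y = Aᵢ + t • D` gives `f y - f Aᵢ ≤ t ‖D‖ (bᵢ - ‖D‖) + O(t²)`, so minimality forces `‖D‖ ≤ bᵢ`. -/

open Finset Filter Topology

section

variable {E : Type*} [NormedAddCommGroup E] [InnerProductSpace ℝ E]

theorem norm_sub_inner_unit_le_norm_sub (v w : E) :
    ‖v‖ - inner ℝ (‖v‖⁻¹ • v) w ≤ ‖v - w‖ := by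
  rcases eq_or_ne v 0 with rfl | hv
  · simp
  calc ‖v‖ - inner ℝ (‖v‖⁻¹ • v) w = inner ℝ (‖v‖⁻¹ • v) (v - w) := by
        rw [inner_sub_right, real_inner_smul_left, real_inner_smul_left,
          real_inner_self_eq_norm_sq]
        field_simp
    _ ≤ ‖‖v‖⁻¹ • v‖ * ‖v - w‖ := real_inner_le_norm _ _
    _ = ‖v - w‖ := by
        rw [norm_smul, norm_inv, norm_norm, inv_mul_cancel₀ (norm_ne_zero_iff.mpr hv), one_mul]

theorem norm_sub_le_norm_sub_inner_unit_add_sq {v : E} (hv : v ≠ 0) (w : E) :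
    ‖v - w‖ ≤ ‖v‖ - inner ℝ (‖v‖⁻¹ • v) w + ‖w‖ ^ 2 / (2 * ‖v‖) := by
  have hv' : 0 < ‖v‖ := norm_pos_iff.mpr hv
  rw [real_inner_smul_left, ← sub_nonneg]
  -- AM-GM `2 ‖v‖ ‖v - w‖ ≤ ‖v‖² + ‖v - w‖²`, with `‖v - w‖²` expanded
  have key : 0 ≤ (‖v‖ - ‖v - w‖) ^ 2 / (2 * ‖v‖) := by positivity
  convert key using 1
  field_simp
  rw [sub_sq, norm_sub_sq_real]
  ring

variable {ι : Type*} (s : Finset ι) (c : ι → ℝ) (a : ι → E) (x : E)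

noncomputable def weightedDirectionSum : E :=
  ∑ j ∈ s, c j • (‖a j - x‖⁻¹ • (a j - x))

theorem inner_weightedDirectionSum_left (w : E) :
    inner ℝ (weightedDirectionSum s c a x) w =
      ∑ j ∈ s, c j * inner ℝ (‖a j - x‖⁻¹ • (a j - x)) w := by
  simp only [weightedDirectionSum, sum_inner, real_inner_smul_left]

variable {s c a x}

theorem sum_norm_sub_inner_le (hc : ∀ j ∈ s, 0 ≤ c j) (y : E) :
    ∑ j ∈ s, c j * ‖x - a j‖ - inner ℝ (weightedDirectionSum s c a x) (y - x) ≤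
      ∑ j ∈ s, c j * ‖y - a j‖ := by
  rw [inner_weightedDirectionSum_left, ← sum_sub_distrib]
  refine sum_le_sum fun j hj => ?_
  have h := norm_sub_inner_unit_le_norm_sub (a j - x) (y - x)
  rw [sub_sub_sub_cancel_right, norm_sub_rev (a j) y] at h
  rw [norm_sub_rev x, ← mul_sub]
  exact mul_le_mul_of_nonneg_left h (hc j hj)

theorem sum_norm_sub_le_add_sq (hc : ∀ j ∈ s, 0 ≤ c j) (ha : ∀ j ∈ s, a j ≠ x) (y : E) :
    ∑ j ∈ s, c j * ‖y - a j‖ ≤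
      ∑ j ∈ s, c j * ‖x - a j‖ - inner ℝ (weightedDirectionSum s c a x) (y - x) +
        (∑ j ∈ s, c j / (2 * ‖a j - x‖)) * ‖y - x‖ ^ 2 := by
  rw [inner_weightedDirectionSum_left, ← sum_sub_distrib, sum_mul, ← sum_add_distrib]
  refine sum_le_sum fun j hj => ?_
  have h := norm_sub_le_norm_sub_inner_unit_add_sq (sub_ne_zero.mpr (ha j hj)) (y - x)
  rw [sub_sub_sub_cancel_right, norm_sub_rev (a j) y] at h
  rw [norm_sub_rev x, div_mul_eq_mul_div, mul_div_assoc, ← mul_sub, ← mul_add]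
  exact mul_le_mul_of_nonneg_left h (hc j hj)

theorem forall_sum_norm_sub_le_iff {β : ℝ} (hc : ∀ j ∈ s, 0 ≤ c j) (ha : ∀ j ∈ s, a j ≠ x)
    (hβ : 0 ≤ β) :
    (∀ y, ∑ j ∈ s, c j * ‖x - a j‖ ≤ β * ‖y - x‖ + ∑ j ∈ s, c j * ‖y - a j‖) ↔
      ‖weightedDirectionSum s c a x‖ ≤ β := by
  set D := weightedDirectionSum s c a x
  constructor
  · intro hmin
    rcases eq_or_ne D 0 with hD | hD
    · rwa [hD, norm_zero]
    set C := ∑ j ∈ s, c j / (2 * ‖a j - x‖)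
    have key : ∀ t > 0, ‖D‖ ≤ β + t * (C * ‖D‖) := by
      intro t ht
      have hlow := hmin (x + t • D)
      have hup := sum_norm_sub_le_add_sq hc ha (x + t • D)
      rw [add_sub_cancel_left, norm_smul, Real.norm_of_nonneg ht.le] at hlow hup
      rw [real_inner_smul_right, real_inner_self_eq_norm_sq] at hup
      have hpos : 0 < t * ‖D‖ := by positivity
      refine le_of_mul_le_mul_left ?_ hpos
      nlinarith
    have hlim : Tendsto (fun t => β + t * (C * ‖D‖)) (𝓝[>] 0) (𝓝 β) := by
      have hcont : Continuous fun t : ℝ => β + t * (C * ‖D‖) := by fun_prop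
      simpa using (hcont.tendsto 0).mono_left nhdsWithin_le_nhds
    exact ge_of_tendsto hlim (eventually_nhdsWithin_of_forall key)
  · intro hD y
    have hinner : inner ℝ D (y - x) ≤ β * ‖y - x‖ :=
      (real_inner_le_norm _ _).trans (mul_le_mul_of_nonneg_right hD (norm_nonneg _))
    linarith [sum_norm_sub_inner_le (a := a) (x := x) hc y]

end

theorem fermat_absorbed_characterization (m n : ℕ)
    (A : Fin m → EuclideanSpace ℝ (Fin n)) (hA : Function.Injective A)
    (b : Fin m → ℝ) (hb : ∀ i, 0 < b i) (i : Fin m) :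
    (∀ y, ∑ j, b j * ‖A i - A j‖ ≤ ∑ j, b j * ‖y - A j‖) ↔
      ‖∑ j ∈ Finset.univ.erase i, b j • (‖A j - A i‖⁻¹ • (A j - A i))‖ ≤ b i := by
  have hsplit : ∀ y, ∑ j, b j * ‖y - A j‖ =
      b i * ‖y - A i‖ + ∑ j ∈ univ.erase i, b j * ‖y - A j‖ :=
    fun y => (add_sum_erase _ _ (mem_univ i)).symm
  refine Iff.trans ?_ (forall_sum_norm_sub_le_iff (fun j _ => (hb j).le)
    (fun j hj => hA.ne (ne_of_mem_erase hj)) (hb i).le)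
  simp only [hsplit, sub_self, norm_zero, mul_zero, zero_add]
end

section
/- Let A₁,…,Aₘ ∈ ℝⁿ be distinct points and b₁,…,bₘ > 0. If for every index i we have ‖ Σ_{j ≠ i} bⱼ (Aⱼ − Aᵢ)/‖Aⱼ − Aᵢ‖ ‖ > bᵢ, then the minimizer A₀ of f(x) = Σⱼ bⱼ ‖x − Aⱼ‖ satisfies A₀ ∉ {A₁,…,Aₘ}. -/
/-!
If the minimiser were `A i`, write `f x = b i * ‖x - A i‖ + g x`, where `g` (the sum over `j ≠ i`)
is differentiable at `A i` with gradient `-u`, `u` the resultant of the hypothesis. Leaving `A i`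
along any direction at unit speed raises the first term at rate `b i` and lowers `g` at rate at
most `‖u‖`, and at rate exactly `‖u‖` along `u`; so minimality forces `‖u‖ ≤ b i`.
-/

open Finset Set

variable {E : Type*} [NormedAddCommGroup E] [InnerProductSpace ℝ E]

theorem hasFDerivAt_norm_of_ne_zero {y : E} (hy : y ≠ 0) :
    HasFDerivAt (‖·‖) (‖y‖⁻¹ • innerSL ℝ y) y := by
  have hsqrt := (hasStrictFDerivAt_norm_sq y).hasFDerivAt.sqrt (by positivity)
  simp only [Real.sqrt_sq (norm_nonneg _)] at hsqrt
  convert hsqrt using 1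
  ext v
  simp only [smul_apply, coe_innerSL_apply, smul_eq_mul, one_div, mul_inv_rev,
    nsmul_eq_mul, Nat.cast_ofNat]
  field_simp

theorem hasFDerivAt_sum_mul_norm_sub {ι : Type*} (s : Finset ι) (b : ι → ℝ) (A : ι → E) {x : E}
    (hx : ∀ j ∈ s, x ≠ A j) :
    HasFDerivAt (fun y ↦ ∑ j ∈ s, b j * ‖y - A j‖)
      (innerSL ℝ (∑ j ∈ s, b j • ‖x - A j‖⁻¹ • (x - A j))) x := by
  simp only [map_sum, map_smul]
  refine HasFDerivAt.fun_sum fun j hj ↦ ?_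
  exact ((hasFDerivAt_norm_of_ne_zero (sub_ne_zero.2 (hx j hj))).comp x
    ((hasFDerivAt_id x).sub_const (A j))).const_mul (b j)

theorem HasFDerivAt.norm_le_of_isLocalMin_mul_norm_sub_add {φ : E → ℝ} {φ' : E →L[ℝ] ℝ}
    {a : E} {c : ℝ} (hφ : HasFDerivAt φ φ' a) (hc : 0 ≤ c)
    (hmin : IsLocalMin (fun x ↦ c * ‖x - a‖ + φ x) a) : ‖φ'‖ ≤ c := by
  have hdir : ∀ v, -φ' v ≤ c * ‖v‖ := by
    intro v
    set ψ : ℝ → ℝ := fun t ↦ c * t * ‖v‖ + φ (a + t • v)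
    have hline : HasDerivAt (fun t : ℝ ↦ a + t • v) v 0 := by
      simpa using ((hasDerivAt_id (0 : ℝ)).smul_const v).const_add a
    have hψ : HasDerivAt ψ (c * 1 * ‖v‖ + φ' v) 0 :=
      ((hasDerivAt_id (0 : ℝ)).const_mul c).mul_const ‖v‖ |>.add
        (hφ.comp_hasDerivAt_of_eq (0 : ℝ) hline (by simp))
    have hloc : IsLocalMinOn ψ (Ici 0) 0 := by
      have hmin' : IsLocalMin (fun x ↦ c * ‖x - a‖ + φ x) (a + (0 : ℝ) • v) := by simpa using hmin
      refine (hmin'.comp_continuous (g := fun t : ℝ ↦ a + t • v) hline.continuousAt).on (Ici 0)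
        |>.congr ?_ self_mem_Ici
      filter_upwards [self_mem_nhdsWithin] with t (ht : 0 ≤ t)
      simp [ψ, norm_smul, abs_of_nonneg ht, mul_assoc]
    have hone : (1 : ℝ) ∈ posTangentConeAt (Ici 0) (0 : ℝ) :=
      mem_posTangentConeAt_of_segment_subset (by simp [segment_eq_Icc, Set.Icc_subset_Ici_self])
    have := hloc.hasFDerivWithinAt_nonneg hψ.hasDerivWithinAt.hasFDerivWithinAt hone
    simp only [mul_one, ContinuousLinearMap.toSpanSingleton_apply, smul_eq_mul, one_mul] at this
    linarith
  refine φ'.opNorm_le_bound hc fun v ↦ abs_le.2 ⟨?_, ?_⟩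
  · linarith [hdir v]
  · simpa using hdir (-v)

theorem fermat_floating_case (m n : ℕ)
    (A : Fin m → EuclideanSpace ℝ (Fin n)) (hA : Function.Injective A)
    (b : Fin m → ℝ) (hb : ∀ i, 0 < b i)
    (h : ∀ i, b i < ‖∑ j ∈ Finset.univ.erase i, b j • (‖A j - A i‖⁻¹ • (A j - A i))‖)
    (A₀ : EuclideanSpace ℝ (Fin n))
    (hmin : ∀ y, ∑ j, b j * ‖A₀ - A j‖ ≤ ∑ j, b j * ‖y - A j‖) :
    ∀ i, A₀ ≠ A i := by
  intro i rfl
  have hne : ∀ j ∈ univ.erase i, A i ≠ A j := fun j hj ↦ hA.ne (ne_of_mem_erase hj).symm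
  have hloc : IsLocalMin (fun x ↦ b i * ‖x - A i‖ + ∑ j ∈ univ.erase i, b j * ‖x - A j‖) (A i) :=
    Filter.Eventually.of_forall fun y ↦ by simpa [add_sum_erase] using hmin y
  have hgrad := (hasFDerivAt_sum_mul_norm_sub _ b A hne).norm_le_of_isLocalMin_mul_norm_sub_add
    (hb i).le hloc
  rw [innerSL_apply_norm, ← norm_neg, ← sum_neg_distrib] at hgrad
  simp only [← smul_neg, neg_sub, norm_sub_rev (A i)] at hgrad
  exact (h i).not_ge hgrad
end
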